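/- (Aziz) Let P be a polynomial of degree n all of whose zeros z satisfy |z| ≥ 1. Then |zP'(z)| ≤ |nP(z) - zP'(z)| for all z in the closed unit disk. -/

import Mathlib

open Polynomial

/-! If `P(z) ≠ 0`, then `zP'(z) = s P(z)` with `s = ∑ z / (z - w)` over the zeros `w` of `P`. For
`|z| ≤ |w|` each term has real part at most `1/2`, so `Re s ≤ n/2`, which for the real number
`n ≥ 0` is exactly `|s| ≤ |n - s|`. -/

-- `2 Re (z (z - w)*) - |z - w|² = |z|² - |w|²`
theorem Complex.re_div_sub_le_half {z w : ℂ} (h : ‖z‖ ≤ ‖w‖) : (z / (z - w)).re ≤ 1 / 2 := by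
  rw [Complex.div_re, ← add_div]
  refine div_le_of_le_mul₀ (Complex.normSq_nonneg _) (by norm_num) ?_
  have hzw : Complex.normSq z ≤ Complex.normSq w := by
    simpa only [← Complex.sq_norm] using pow_le_pow_left₀ (norm_nonneg z) h 2
  simp only [Complex.normSq_apply, Complex.sub_re, Complex.sub_im] at hzw ⊢
  nlinarith

theorem Complex.norm_le_norm_sub_of_re_le {s : ℂ} {a : ℝ} (ha : 0 ≤ a) (h : s.re ≤ a / 2) :
    ‖s‖ ≤ ‖a - s‖ := by
  refine (pow_le_pow_iff_left₀ (norm_nonneg _) (norm_nonneg _) two_ne_zero).mp ?_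
  simp only [Complex.sq_norm, Complex.normSq_apply, Complex.sub_re, Complex.sub_im,
    Complex.ofReal_re, Complex.ofReal_im]
  nlinarith

theorem Complex.re_sum_div_sub_le (z : ℂ) (s : Multiset ℂ) (h : ∀ w ∈ s, ‖z‖ ≤ ‖w‖) :
    ((s.map fun w ↦ z / (z - w)).sum).re ≤ s.card / 2 := by
  induction s using Multiset.induction_on with
  | empty => simp
  | cons a t ih =>
    simp only [Multiset.map_cons, Multiset.sum_cons, Complex.add_re, Multiset.card_cons,
      Nat.cast_succ]
    have := Complex.re_div_sub_le_half (h a (Multiset.mem_cons_self a t))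
    have := ih fun w hw ↦ h w (Multiset.mem_cons_of_mem hw)
    linarith

theorem Polynomial.Splits.mul_eval_derivative {K : Type*} [Field K] {f : K[X]} (hf : f.Splits)
    {x : K} (hx : f.eval x ≠ 0) :
    x * f.derivative.eval x = (f.roots.map fun z ↦ x / (x - z)).sum * f.eval x := by
  rw [hf.eval_derivative_eq_eval_mul_sum hx, mul_left_comm, ← Multiset.sum_map_mul_left, mul_comm]
  simp only [mul_one_div]

theorem stmt6_general (P : Polynomial ℂ) (n : ℕ) (hn : P.natDegree = n)
    (hroots : ∀ w : ℂ, P.eval w = 0 → 1 ≤ ‖w‖)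
    (z : ℂ) (hz : ‖z‖ ≤ 1) :
    ‖z * P.derivative.eval z‖ ≤ ‖(n : ℂ) * P.eval z - z * P.derivative.eval z‖ := by
  by_cases hPz : P.eval z = 0
  · simp [hPz]
  have hP : P.Splits := IsAlgClosed.splits P
  set s := (P.roots.map fun w ↦ z / (z - w)).sum
  have hs : s.re ≤ (n : ℝ) / 2 := by
    rw [← hn, ← splits_iff_card_roots.mp hP]
    exact Complex.re_sum_div_sub_le z P.roots fun w hw ↦
      hz.trans (hroots w (isRoot_of_mem_roots hw))
  calc ‖z * P.derivative.eval z‖ = ‖s‖ * ‖P.eval z‖ := by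
        rw [hP.mul_eval_derivative hPz, norm_mul]
    _ ≤ ‖(n : ℂ) - s‖ * ‖P.eval z‖ := by
        gcongr
        exact_mod_cast Complex.norm_le_norm_sub_of_re_le n.cast_nonneg hs
    _ = ‖(n : ℂ) * P.eval z - z * P.derivative.eval z‖ := by
        rw [hP.mul_eval_derivative hPz, ← sub_mul, norm_mul]

/-- (Aziz) If all zeros of `P` satisfy `|w| ≥ 1`, then `|zP'(z)| ≤ |nP(z) - zP'(z)|` on the
closed unit disk. -/
theorem stmt6 (P : Polynomial ℂ) (n : ℕ) (hn : P.natDegree = n) (hP : P ≠ 0)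
    (hroots : ∀ w : ℂ, P.eval w = 0 → 1 ≤ ‖w‖)
    (z : ℂ) (hz : ‖z‖ ≤ 1) :
    ‖z * P.derivative.eval z‖ ≤ ‖(n : ℂ) * P.eval z - z * P.derivative.eval z‖ :=
  stmt6_general P n hn hroots z hz
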